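/- Let G be a finite connected strictly chordal graph. Then every critical clique of G (every equivalence class of the true-twin relation) is either the set of all simplicial vertices of some maximal clique of G, or a minimal vertex separator of G. -/

import Mathlib

/-- A chord of a closed walk. -/
def SimpleGraph.HasChord {V : Type*} (G : SimpleGraph V) {v : V} (w : G.Walk v v) : Prop :=
  ∃ x y, x ∈ w.support ∧ y ∈ w.support ∧ G.Adj x y ∧ s(x, y) ∉ w.edges

/-- A graph is chordal if every cycle of length at least 4 has a chord. -/
def SimpleGraph.IsChordal {V : Type*} (G : SimpleGraph V) : Prop :=
  ∀ (v : V) (w : G.Walk v v), w.IsCycle → 4 ≤ w.length → G.HasChord w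

/-- `S` is a `uv`-separator. -/
def SimpleGraph.IsUVSeparator {V : Type*} (G : SimpleGraph V) (u v : V) (S : Set V) : Prop :=
  u ∉ S ∧ v ∉ S ∧ ∀ p : G.Walk u v, ∃ x ∈ p.support, x ∈ S

/-- A minimal vertex separator. -/
def SimpleGraph.IsMinVtxSep {V : Type*} (G : SimpleGraph V) (S : Set V) : Prop :=
  ∃ u v, u ≠ v ∧ ¬ G.Adj u v ∧ G.IsUVSeparator u v S ∧
    ∀ S' ⊂ S, ¬ G.IsUVSeparator u v S'

/-- A graph is strictly chordal if it is chordal and any two distinct minimal vertex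
separators are disjoint. -/
def SimpleGraph.IsStrictlyChordal {V : Type*} (G : SimpleGraph V) : Prop :=
  G.IsChordal ∧
    ∀ S S' : Set V, G.IsMinVtxSep S → G.IsMinVtxSep S' → S ≠ S' → Disjoint S S'

/-- A vertex is simplicial if its neighborhood is a clique. -/
def SimpleGraph.IsSimplicialVtx {V : Type*} (G : SimpleGraph V) (v : V) : Prop :=
  G.IsClique (G.neighborSet v)

/-- The closed neighborhood `N[v]` of a vertex. -/
def SimpleGraph.closedNbhd {V : Type*} (G : SimpleGraph V) (v : V) : Set V :=
  insert v (G.neighborSet v)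

/-- A critical clique: an equivalence class of the true-twin relation `N[u] = N[v]`. -/
def SimpleGraph.IsCriticalClique {V : Type*} (G : SimpleGraph V) (C : Set V) : Prop :=
  ∃ v : V, C = {u : V | G.closedNbhd u = G.closedNbhd v}

/-- A maximal clique. -/
def SimpleGraph.IsMaxClique {V : Type*} (G : SimpleGraph V) (Q : Set V) : Prop :=
  G.IsClique Q ∧ ∀ Q' : Set V, G.IsClique Q' → Q ⊆ Q' → Q' = Q

/-!
If `v` is simplicial, `N[v]` is a maximal clique whose simplicial vertices are exactly the true
twins of `v`. Otherwise `v` has two non-adjacent neighbours `a` and `b`. The set `S` of neighbours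
of `a` that see the component of `b` in `G - N[a]` is a minimal `ab`-separator containing `v`. It
is a clique by chordality: a chordless path through that component between two non-adjacent
vertices of `S` would close up through `a` into a chordless cycle of length at least four.
If `s, t ∈ S` and `w` is a neighbour of `s` outside `N[t]`, then `s` lies in the minimal
separator `S(t, w)`, which misses `t` and hence differs from `S`; strict chordality forbids this.
So all vertices of `S` are true twins, and `S` is the twin class of `v`.
-/

namespace SimpleGraph

variable {V : Type*} {G : SimpleGraph V}

lemma mem_closedNbhd {u v : V} : u ∈ G.closedNbhd v ↔ u = v ∨ G.Adj v u := Iff.rfl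

lemma mem_closedNbhd_comm {u v : V} : u ∈ G.closedNbhd v ↔ v ∈ G.closedNbhd u := by
  simp only [mem_closedNbhd, eq_comm, G.adj_comm]

lemma isClique_closedNbhd_iff {v : V} : G.IsClique (G.closedNbhd v) ↔ G.IsSimplicialVtx v := by
  simp +contextual [closedNbhd, isClique_insert, IsSimplicialVtx]

lemma IsClique.subset_closedNbhd {Q : Set V} {v : V} (hQ : G.IsClique Q) (hv : v ∈ Q) :
    Q ⊆ G.closedNbhd v := fun u hu =>
  (eq_or_ne u v).imp id fun huv => hQ hv hu huv.symm

lemma isMaxClique_closedNbhd {v : V} (hv : G.IsSimplicialVtx v) :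
    G.IsMaxClique (G.closedNbhd v) :=
  ⟨isClique_closedNbhd_iff.2 hv, fun _ hQ hsub =>
    (hQ.subset_closedNbhd (hsub (Set.mem_insert v _))).antisymm hsub⟩

lemma twinClass_eq_of_isSimplicialVtx {v : V} (hv : G.IsSimplicialVtx v) :
    {u | G.closedNbhd u = G.closedNbhd v} = {u ∈ G.closedNbhd v | G.IsSimplicialVtx u} := by
  ext u
  constructor
  · intro hu
    exact ⟨hu ▸ Set.mem_insert u _,
      isClique_closedNbhd_iff.1 (hu ▸ isClique_closedNbhd_iff.2 hv)⟩
  · rintro ⟨huv, hu⟩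
    exact ((isClique_closedNbhd_iff.2 hu).subset_closedNbhd (mem_closedNbhd_comm.1 huv)).antisymm
      ((isClique_closedNbhd_iff.2 hv).subset_closedNbhd huv)

namespace Walk

variable {u v x y : V}

lemma mk_mem_edges_of_length_eq_one : ∀ {p : G.Walk u v}, p.length = 1 → s(u, v) ∈ p.edges
  | cons _ nil, _ => List.mem_singleton_self _

lemma exists_length_lt_append_of_adj (p₁ : G.Walk u x) (p₂ : G.Walk x v)
    (hxy : G.Adj x y) (hy : y ∈ p₂.support) (he : s(x, y) ∉ p₂.edges) :
    ∃ q : G.Walk u v,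
      q.support ⊆ (p₁.append p₂).support ∧ q.length < (p₁.append p₂).length := by
  classical
  refine ⟨p₁.append (cons hxy (p₂.dropUntil y hy)), fun z hz => ?_, ?_⟩
  · rw [mem_support_append_iff, support_cons, List.mem_cons] at hz
    rw [mem_support_append_iff]
    rcases hz with hz | rfl | hz
    · exact Or.inl hz
    · exact Or.inl p₁.end_mem_support
    · exact Or.inr (p₂.support_dropUntil_subset_support hy hz)
  · have hsplit := congrArg length (p₂.take_spec hy)
    have h0 : (p₂.takeUntil y hy).length ≠ 0 := fun h => hxy.ne (eq_of_length_eq_zero h)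
    have h1 : (p₂.takeUntil y hy).length ≠ 1 := by
      intro h
      exact he (p₂.edges_takeUntil_subset_edges hy (mk_mem_edges_of_length_eq_one h))
    simp only [length_append, length_cons] at hsplit ⊢
    omega

lemma exists_length_lt_of_isChord {p : G.Walk u v} (h : p.IsChord s(x, y)) :
    ∃ q : G.Walk u v, q.support ⊆ p.support ∧ q.length < p.length := by
  obtain ⟨hxy, he, hx, hy⟩ := isChord_sym2Mk.1 h
  obtain ⟨p₁, p₂, rfl⟩ := mem_support_iff_exists_append.1 hx
  rw [edges_append, List.mem_append, not_or] at he
  rcases (mem_support_append_iff _ _).1 hy with hy | hy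
  · obtain ⟨q, hq, hlen⟩ := exists_length_lt_append_of_adj p₂.reverse p₁.reverse hxy
      (by simpa using hy) (by simpa using he.1)
    refine ⟨q.reverse, fun z hz => ?_, ?_⟩
    · simpa [or_comm] using hq (by simpa using hz)
    · simpa [add_comm] using hlen
  · exact exists_length_lt_append_of_adj p₁ p₂ hxy hy he.2

lemma exists_isPath_isChordless (p : G.Walk u v) :
    ∃ q : G.Walk u v, q.IsPath ∧ q.IsChordless ∧ q.support ⊆ p.support := by
  classical
  -- a shortest walk with support in `p.support` has no chord, since a chord would shorten it
  have hex : ∃ n, ∃ q : G.Walk u v, q.support ⊆ p.support ∧ q.length = n :=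
    ⟨_, p, fun _ h => h, rfl⟩
  obtain ⟨q, hqp, hqlen⟩ := Nat.find_spec hex
  refine ⟨q.bypass, q.bypass_isPath, fun e he => ?_,
    List.Subset.trans q.support_bypass_subset_support hqp⟩
  induction e using Sym2.ind
  obtain ⟨r, hr, hlen⟩ := exists_length_lt_of_isChord he
  have := Nat.find_min' hex ⟨r, fun z hz => hqp (q.support_bypass_subset_support (hr hz)), rfl⟩
  have := q.length_bypass_le_length
  omega

end Walk

lemma IsChordal.adj_of_isChordless {a x y : V} (hG : G.IsChordal) {P : G.Walk x y}
    (hP : P.IsPath) (hPc : P.IsChordless) (hxy : x ≠ y) (hax : G.Adj a x) (hay : G.Adj a y)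
    (hPa : ∀ z ∈ P.support, z ∈ G.closedNbhd a → z = x ∨ z = y) : G.Adj x y := by
  by_contra hnxy
  have haP : a ∉ P.support := fun ha => by
    rcases hPa a ha (Set.mem_insert a _) with rfl | rfl
    exacts [hax.ne rfl, hay.ne rfl]
  set w : G.Walk a a := .cons hax (P.concat hay.symm)
  have hcyc : w.IsCycle := by
    refine (Walk.cons_isCycle_iff _ _).2 ⟨hP.concat haP _, fun he => ?_⟩
    rw [Walk.edges_concat, List.concat_eq_append, List.mem_append, List.mem_singleton,
      Sym2.eq_iff] at he
    rcases he with he | ⟨rfl, rfl⟩ | ⟨-, rfl⟩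
    exacts [haP (P.fst_mem_support_of_mem_edges he), hax.ne rfl, hxy rfl]
  have hlen : 4 ≤ w.length := by
    have h0 : P.length ≠ 0 := fun h => hxy (Walk.eq_of_length_eq_zero h)
    have h1 : P.length ≠ 1 := fun h => hnxy (Walk.adj_of_length_eq_one h)
    simp only [w, Walk.length_cons, Walk.length_concat]
    omega
  have hPw : ∀ {e}, e ∈ P.edges → e ∈ w.edges := fun he => by simp [w, he]
  have haw : ∀ z ∈ P.support, G.Adj a z → s(a, z) ∈ w.edges := fun z hz haz => by
    rcases hPa z hz (Or.inr haz) with rfl | rfl <;> simp [w, Sym2.eq_swap]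
  obtain ⟨c, d, hc, hd, hcd, hne⟩ := hG a w hcyc hlen
  have hw : ∀ z ∈ w.support, z = a ∨ z ∈ P.support := fun z hz => by
    simp only [w, Walk.support_cons, Walk.support_concat, List.mem_cons, List.mem_append] at hz
    tauto
  rcases hw c hc with rfl | hcP <;> rcases hw d hd with rfl | hdP
  · exact G.loopless.irrefl _ hcd
  · exact hne (haw d hdP hcd)
  · exact hne (Sym2.eq_swap ▸ haw c hcP hcd.symm)
  · exact hne (hPw (hPc.mem_edges hcP hdP hcd))

/-- The component of `b` in `G - N[a]`. -/
def farComponent (G : SimpleGraph V) (a b : V) : Set V :=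
  {x | ∃ p : G.Walk b x, ∀ z ∈ p.support, z ∉ G.closedNbhd a}

def nearSeparator (G : SimpleGraph V) (a b : V) : Set V :=
  {s | G.Adj a s ∧ ∃ x ∈ G.farComponent a b, G.Adj s x}

variable {a b : V}

lemma mem_farComponent_self (hb : b ∉ G.closedNbhd a) : b ∈ G.farComponent a b :=
  ⟨.nil, by simpa⟩

lemma notMem_closedNbhd_of_mem_farComponent {x : V} (hx : x ∈ G.farComponent a b) :
    x ∉ G.closedNbhd a :=
  let ⟨p, hp⟩ := hx
  hp x p.end_mem_support

lemma mem_closedNbhd_of_adj_of_mem_farComponent {x y : V} (hx : x ∈ G.farComponent a b)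
    (hxy : G.Adj x y) (hy : y ∉ G.farComponent a b) : y ∈ G.closedNbhd a := by
  by_contra hya
  obtain ⟨p, hp⟩ := hx
  refine hy ⟨p.concat hxy, fun z hz => ?_⟩
  rw [Walk.support_concat, List.mem_append, List.mem_singleton] at hz
  rcases hz with hz | rfl
  exacts [hp z hz, hya]

lemma left_notMem_nearSeparator : a ∉ G.nearSeparator a b := fun h => G.loopless.irrefl _ h.1

lemma mem_nearSeparator_of_adj {u : V} (hb : b ∉ G.closedNbhd a) (hau : G.Adj a u)
    (hub : G.Adj u b) : u ∈ G.nearSeparator a b :=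
  ⟨hau, b, mem_farComponent_self hb, hub⟩

lemma isUVSeparator_nearSeparator (hb : b ∉ G.closedNbhd a) :
    G.IsUVSeparator a b (G.nearSeparator a b) := by
  refine ⟨left_notMem_nearSeparator, fun h => hb (Or.inr h.1), fun p => ?_⟩
  obtain ⟨d, hd, hdF, hdF'⟩ := p.reverse.exists_boundary_dart (G.farComponent a b)
    (mem_farComponent_self hb)
    fun h => notMem_closedNbhd_of_mem_farComponent h (Set.mem_insert a _)
  refine ⟨d.snd, by simpa using p.reverse.dart_snd_mem_support_of_mem_darts hd, ?_⟩
  rcases mem_closedNbhd_of_adj_of_mem_farComponent hdF d.adj hdF' with hda | hda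
  · exact absurd (Or.inr (hda ▸ d.adj.symm)) (notMem_closedNbhd_of_mem_farComponent hdF)
  · exact ⟨hda, d.fst, hdF, d.adj.symm⟩

lemma isMinVtxSep_nearSeparator (hb : b ∉ G.closedNbhd a) :
    G.IsMinVtxSep (G.nearSeparator a b) := by
  refine ⟨a, b, fun h => hb (Or.inl h.symm), fun h => hb (Or.inr h),
    isUVSeparator_nearSeparator hb, fun S hS hsep => ?_⟩
  obtain ⟨s, hsS, hs⟩ := Set.exists_of_ssubset hS
  obtain ⟨has, x, ⟨p, hp⟩, hsx⟩ := hsS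
  obtain ⟨z, hz, hzS⟩ := hsep.2.2 (.cons has (.cons hsx p.reverse))
  have hza : G.Adj a z := (hS.subset hzS).1
  simp only [Walk.support_cons, Walk.support_reverse, List.mem_cons, List.mem_reverse] at hz
  rcases hz with rfl | rfl | hz
  · exact G.loopless.irrefl _ hza
  · exact hs hzS
  · exact hp z hz (Or.inr hza)

lemma IsChordal.isClique_nearSeparator (hG : G.IsChordal) :
    G.IsClique (G.nearSeparator a b) := by
  intro x hx y hy hxy
  obtain ⟨hax, p, ⟨wp, hwp⟩, hxp⟩ := hx
  obtain ⟨hay, q, ⟨wq, hwq⟩, hyq⟩ := hy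
  obtain ⟨P, hP, hPc, hPW⟩ :=
    (Walk.cons hxp (wp.reverse.append (wq.concat hyq.symm))).exists_isPath_isChordless
  refine hG.adj_of_isChordless hP hPc hxy hax hay fun z hz hza => ?_
  have hzW := hPW hz
  simp only [Walk.support_cons, Walk.mem_support_append_iff, Walk.support_reverse,
    Walk.support_concat, List.mem_cons, List.mem_reverse, List.mem_append, List.not_mem_nil,
    or_false] at hzW
  rcases hzW with rfl | hzp | hzq | rfl
  exacts [Or.inl rfl, (hwp z hzp hza).elim, (hwq z hzq hza).elim, Or.inr rfl]

lemma IsStrictlyChordal.closedNbhd_subset_of_mem_nearSeparator (hG : G.IsStrictlyChordal)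
    (hb : b ∉ G.closedNbhd a) {s t : V} (hs : s ∈ G.nearSeparator a b)
    (ht : t ∈ G.nearSeparator a b) : G.closedNbhd s ⊆ G.closedNbhd t := by
  have hst : s ∈ G.closedNbhd t :=
    (eq_or_ne s t).imp id fun h => hG.1.isClique_nearSeparator ht hs h.symm
  rintro w (rfl | hsw)
  · exact hst
  by_contra hw
  rcases hst with rfl | hts
  · exact hw (Or.inr hsw)
  have hdisj := hG.2 _ _ (isMinVtxSep_nearSeparator hb) (isMinVtxSep_nearSeparator hw)
    fun h => left_notMem_nearSeparator (h ▸ ht)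
  exact Set.disjoint_left.1 hdisj hs (mem_nearSeparator_of_adj hw hts hsw)

lemma IsStrictlyChordal.twinClass_eq_nearSeparator (hG : G.IsStrictlyChordal)
    (hb : b ∉ G.closedNbhd a) {v : V} (hva : G.Adj v a) (hvb : G.Adj v b) :
    {u | G.closedNbhd u = G.closedNbhd v} = G.nearSeparator a b := by
  have hv := mem_nearSeparator_of_adj hb hva.symm hvb
  ext u
  constructor
  · intro (hu : G.closedNbhd u = G.closedNbhd v)
    have hua : a ∈ G.closedNbhd u := hu ▸ Or.inr hva
    have hub : b ∈ G.closedNbhd u := hu ▸ Or.inr hvb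
    rcases hua with rfl | hua
    · exact absurd hub hb
    rcases hub with rfl | hub
    · exact absurd (Or.inr hua.symm) hb
    exact mem_nearSeparator_of_adj hb hua.symm hub
  · intro hu
    exact (hG.closedNbhd_subset_of_mem_nearSeparator hb hu hv).antisymm
      (hG.closedNbhd_subset_of_mem_nearSeparator hb hv hu)

end SimpleGraph

theorem criticalClique_structure_general {V : Type*} (G : SimpleGraph V)
    (hsc : G.IsStrictlyChordal) (C : Set V)
    (hC : G.IsCriticalClique C) :
    (∃ Q : Set V, G.IsMaxClique Q ∧ C = {v ∈ Q | G.IsSimplicialVtx v}) ∨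
      G.IsMinVtxSep C := by
  obtain ⟨v, rfl⟩ := hC
  by_cases hv : G.IsSimplicialVtx v
  · exact Or.inl ⟨_, G.isMaxClique_closedNbhd hv, G.twinClass_eq_of_isSimplicialVtx hv⟩
  obtain ⟨a, hva, b, hvb, hab, hnab⟩ :
      ∃ a ∈ G.neighborSet v, ∃ b ∈ G.neighborSet v, a ≠ b ∧ ¬ G.Adj a b := by
    simpa [SimpleGraph.IsSimplicialVtx, SimpleGraph.IsClique, Set.Pairwise] using hv
  have hb : b ∉ G.closedNbhd a := by simp [SimpleGraph.mem_closedNbhd, hab.symm, hnab]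
  right
  rw [hsc.twinClass_eq_nearSeparator hb hva hvb]
  exact G.isMinVtxSep_nearSeparator hb

/-- In a finite connected strictly chordal graph, every critical clique is either the set of
all simplicial vertices of some maximal clique, or a minimal vertex separator. -/
theorem criticalClique_structure {V : Type*} [Fintype V] (G : SimpleGraph V)
    (hconn : G.Connected) (hsc : G.IsStrictlyChordal) (C : Set V)
    (hC : G.IsCriticalClique C) :
    (∃ Q : Set V, G.IsMaxClique Q ∧ C = {v ∈ Q | G.IsSimplicialVtx v}) ∨
      G.IsMinVtxSep C :=
  criticalClique_structure_general G hsc C hC
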